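/- Let V be a finite-dimensional complex vector space and x, y ∈ End(V) operators whose commutator x∘y − y∘x has rank at most one. Then for every element a of the unital ℂ-subalgebra of End(V) generated by x and y (equivalently, for every noncommutative polynomial a = p(x,y)), one has Tr(a ∘ (x∘y − y∘x)) = 0. -/

import Mathlib

/-!
Over an algebraically closed field, a nonzero commutator `c = x * y - y * x` of rank at most one
forces a common invariant subspace `0 ≠ W ≠ V` of `x` and `y`. Pick an eigenvalue `μ` of `x` and
put `x' = x - μ`, so that `x' * y - y * x' = c`. If `c` vanishes on `ker x'`, then `ker x'` is
`y`-invariant. Otherwise `c w ≠ 0` for some `w ∈ ker x'`, so `range c` is the line through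
`c w = x' (y w)`; hence `range c ≤ range x'`, and `range x'` is `y`-invariant.

Every element of the algebra generated by `x` and `y` preserves `W`, the trace of an endomorphism
preserving `W` is the sum of the traces it induces on `W` and on `V ⧸ W`, and the rank condition
passes to both, so induction on the dimension concludes.
-/

open Module LinearMap

namespace Submodule

section Semiring

variable {R M : Type*} [CommSemiring R] [AddCommMonoid M] [Module R M] (W : Submodule R M)

def endStabilizer : Subalgebra R (Module.End R M) where
  carrier := {f | W ≤ W.comap f}
  mul_mem' hf hg := hg.trans (comap_mono hf)
  add_mem' hf hg _ hv := W.add_mem (hf hv) (hg hv)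
  algebraMap_mem' r _ hv := W.smul_mem r hv

def restrictAlgHom : W.endStabilizer →ₐ[R] Module.End R W where
  toFun f := f.1.restrict f.2
  map_one' := rfl
  map_mul' _ _ := rfl
  map_zero' := rfl
  map_add' _ _ := rfl
  commutes' _ := rfl

end Semiring

variable {R M : Type*} [CommRing R] [AddCommGroup M] [Module R M] (W : Submodule R M)

def mapQAlgHom : W.endStabilizer →ₐ[R] Module.End R (M ⧸ W) where
  toFun f := W.mapQ W f.1 f.2
  map_one' := by ext; rfl
  map_mul' _ _ := by ext; rfl
  map_zero' := by ext; rfl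
  map_add' _ _ := by ext; rfl
  commutes' _ := by ext; rfl

end Submodule

theorem LinearMap.trace_eq_trace_restrict_add_trace_mapQ {R M : Type*} [CommRing R]
    [AddCommGroup M] [Module R M] (W : Submodule R M) [Module.Free R W] [Module.Finite R W]
    [Module.Free R (M ⧸ W)] [Module.Finite R (M ⧸ W)] (f : Module.End R M)
    (hf : W ≤ W.comap f) :
    trace R M f = trace R W (f.restrict hf) + trace R (M ⧸ W) (W.mapQ W f hf) := by
  classical
  let bW := Free.chooseBasis R W
  let bQ := Free.chooseBasis R (M ⧸ W)
  rw [trace_eq_matrix_trace R (bW.sumQuot bQ), trace_eq_matrix_trace R bW,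
    trace_eq_matrix_trace R bQ, Matrix.trace, Fintype.sum_sum_type]
  congr 1 <;> refine Finset.sum_congr rfl fun i _ ↦ ?_
  · simp only [Matrix.diag, toMatrix_apply, Basis.sumQuot_inl]
    exact Basis.sumQuot_repr_inl_of_mem bW bQ _ (hf (bW i).2) i
  · simp only [Matrix.diag, toMatrix_apply, Basis.sumQuot_repr_inr]
    rw [← Basis.sumQuot_inr bW bQ i]
    rfl

theorem AlgHom.apply_mem_adjoin_pair {R A B : Type*} [CommSemiring R] [Semiring A] [Semiring B]
    [Algebra R A] [Algebra R B] (φ : A →ₐ[R] B) {x y a : A} (ha : a ∈ Algebra.adjoin R {x, y}) :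
    φ a ∈ Algebra.adjoin R {φ x, φ y} := by
  rw [← Set.image_pair, ← AlgHom.map_adjoin]
  exact Subalgebra.mem_map.2 ⟨a, ha, rfl⟩

section FiniteDimensional

variable {K V : Type*} [Field K] [AddCommGroup V] [Module K V] [FiniteDimensional K V]

theorem LinearMap.finrank_range_restrict_le {W : Submodule K V} (f : Module.End K V)
    (hf : W ≤ W.comap f) :
    finrank K (range (f.restrict hf)) ≤ finrank K (range f) := by
  rw [range_restrict, ← Submodule.finrank_map_subtype_eq, Submodule.map_comap_subtype]
  exact Submodule.finrank_mono (inf_le_right.trans map_le_range)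

theorem LinearMap.finrank_range_mapQ_le {W : Submodule K V} (f : Module.End K V)
    (hf : W ≤ W.comap f) :
    finrank K (range (W.mapQ W f hf)) ≤ finrank K (range f) := by
  rw [Submodule.range_mapQ]
  exact Submodule.finrank_map_le _ _

theorem LinearMap.range_le_of_finrank_range_le_one {V₀ : Type*} [AddCommGroup V₀] [Module K V₀]
    {f : V₀ →ₗ[K] V} (hf : finrank K (range f) ≤ 1) {w : V₀} (hw : f w ≠ 0)
    {U : Submodule K V} (hU : f w ∈ U) : range f ≤ U := by
  have hspan : K ∙ f w = range f :=
    Submodule.eq_of_le_of_finrank_le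
      ((Submodule.span_singleton_le_iff_mem _ _).2 (mem_range_self f w))
      (by rwa [finrank_span_singleton hw])
  rwa [← hspan, Submodule.span_singleton_le_iff_mem]

end FiniteDimensional

namespace Module.End

section Field

variable {K V : Type*} [Field K] [AddCommGroup V] [Module K V]

def IsTraceOrthogonalCommutator (x y : Module.End K V) : Prop :=
  ∀ a ∈ Algebra.adjoin K {x, y}, trace K V (a * (x * y - y * x)) = 0

theorem IsTraceOrthogonalCommutator.trace_apply_mul_commutator {A : Type*} [Ring A]
    [Algebra K A] (φ : A →ₐ[K] Module.End K V) {x y a : A}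
    (h : IsTraceOrthogonalCommutator (φ x) (φ y)) (ha : a ∈ Algebra.adjoin K {x, y}) :
    trace K V (φ (a * (x * y - y * x))) = 0 := by
  rw [map_mul φ, map_sub φ, map_mul φ, map_mul φ]
  exact h _ (φ.apply_mem_adjoin_pair ha)

theorem IsTraceOrthogonalCommutator.of_restrict_of_mapQ [FiniteDimensional K V]
    {W : Submodule K V} (x y : W.endStabilizer)
    (hW : IsTraceOrthogonalCommutator (W.restrictAlgHom x) (W.restrictAlgHom y))
    (hQ : IsTraceOrthogonalCommutator (W.mapQAlgHom x) (W.mapQAlgHom y)) :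
    IsTraceOrthogonalCommutator (x : Module.End K V) y := by
  intro b hb
  obtain ⟨a, ha, rfl⟩ : b ∈ (Algebra.adjoin K {x, y}).map W.endStabilizer.val := by
    rwa [AlgHom.map_adjoin, Set.image_pair]
  let c : W.endStabilizer := x * y - y * x
  calc trace K V (a * c : W.endStabilizer)
      = trace K W (W.restrictAlgHom (a * c)) + trace K (V ⧸ W) (W.mapQAlgHom (a * c)) :=
        trace_eq_trace_restrict_add_trace_mapQ W _ (a * c).2
    _ = 0 := by
      rw [hW.trace_apply_mul_commutator _ ha, hQ.trace_apply_mul_commutator _ ha, add_zero]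

theorem ker_le_comap_ker_of_ker_le_ker_commutator {x y : Module.End K V}
    (h : ker x ≤ ker (x * y - y * x)) : ker x ≤ (ker x).comap y := by
  intro v hv
  have := h hv
  simp_all [mem_ker, Module.End.mul_apply]

theorem range_le_comap_range_of_range_commutator_le {x y : Module.End K V}
    (h : range (x * y - y * x) ≤ range x) : range x ≤ (range x).comap y := by
  rintro _ ⟨u, rfl⟩
  have hyx : y (x u) = x (y u) - (x * y - y * x) u := by simp [Module.End.mul_apply]
  rw [Submodule.mem_comap, hyx]
  exact sub_mem (mem_range_self x _) (h (mem_range_self _ u))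

variable [FiniteDimensional K V]

theorem exists_invariant_of_ker_ne_bot {x y : Module.End K V} (hker : ker x ≠ ⊥)
    (hc : x * y - y * x ≠ 0) (hrk : finrank K (range (x * y - y * x)) ≤ 1) :
    ∃ W : Submodule K V, W ≠ ⊥ ∧ W ≠ ⊤ ∧ W ≤ W.comap x ∧ W ≤ W.comap y := by
  by_cases hkc : ker x ≤ ker (x * y - y * x)
  · refine ⟨ker x, hker, fun htop ↦ hc ?_, fun v hv ↦ by simp [mem_ker.1 hv],
      ker_le_comap_ker_of_ker_le_ker_commutator hkc⟩
    rw [ker_eq_top.1 htop, zero_mul, mul_zero, sub_zero]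
  · obtain ⟨w, hw, hcw⟩ := Set.not_subset.1 hkc
    have hcw_range : (x * y - y * x) w ∈ range x := ⟨y w, by simp_all [Module.End.mul_apply]⟩
    have hrange : range (x * y - y * x) ≤ range x :=
      range_le_of_finrank_range_le_one hrk hcw hcw_range
    refine ⟨range x, fun hbot ↦ hcw ?_, fun htop ↦ hker ?_, fun v _ ↦ mem_range_self x v,
      range_le_comap_range_of_range_commutator_le hrange⟩
    · simpa [hbot] using hcw_range
    · exact ker_eq_bot.2 (injective_iff_surjective.2 (range_eq_top.1 htop))

theorem exists_invariant_of_commutator_ne_zero [IsAlgClosed K] {x y : Module.End K V}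
    (hc : x * y - y * x ≠ 0) (hrk : finrank K (range (x * y - y * x)) ≤ 1) :
    ∃ W : Submodule K V, W ≠ ⊥ ∧ W ≠ ⊤ ∧ W ≤ W.comap x ∧ W ≤ W.comap y := by
  have : Nontrivial V := by
    contrapose! hc
    exact Subsingleton.elim _ _
  obtain ⟨μ, hμ⟩ := Module.End.exists_eigenvalue x
  set x' := x - μ • 1
  have hker : ker x' ≠ ⊥ := by rwa [hasEigenvalue_iff, eigenspace_def] at hμ
  have hcomm : x' * y - y * x' = x * y - y * x := by
    simp only [x', sub_mul, mul_sub, smul_mul_assoc, mul_smul_comm, one_mul, mul_one]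
    abel
  obtain ⟨W, hbot, htop, hx', hy⟩ :=
    exists_invariant_of_ker_ne_bot hker (hcomm ▸ hc) (hcomm ▸ hrk)
  refine ⟨W, hbot, htop, fun v hv ↦ ?_, hy⟩
  have hxv : x v = x' v + μ • v := by simp [x']
  rw [Submodule.mem_comap, hxv]
  exact W.add_mem (hx' hv) (W.smul_mem μ hv)

theorem isTraceOrthogonalCommutator_of_finrank_range_le_one [IsAlgClosed K]
    {x y : Module.End K V} (hrk : finrank K (range (x * y - y * x)) ≤ 1) :
    IsTraceOrthogonalCommutator x y := by
  induction hn : finrank K V using Nat.strong_induction_on generalizing V with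
  | _ n ih =>
  by_cases hc : x * y - y * x = 0
  · intro a _
    rw [hc, mul_zero, map_zero]
  obtain ⟨W, hbot, htop, hx, hy⟩ := exists_invariant_of_commutator_ne_zero hc hrk
  let x' : W.endStabilizer := ⟨x, hx⟩
  let y' : W.endStabilizer := ⟨y, hy⟩
  have hrkW : finrank K (range (W.restrictAlgHom x' * W.restrictAlgHom y'
      - W.restrictAlgHom y' * W.restrictAlgHom x')) ≤ 1 := by
    rw [← map_mul, ← map_mul, ← map_sub]
    exact (finrank_range_restrict_le _ (x' * y' - y' * x').2).trans hrk
  have hrkQ : finrank K (range (W.mapQAlgHom x' * W.mapQAlgHom y'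
      - W.mapQAlgHom y' * W.mapQAlgHom x')) ≤ 1 := by
    rw [← map_mul, ← map_mul, ← map_sub]
    exact (finrank_range_mapQ_le _ (x' * y' - y' * x').2).trans hrk
  have hW : finrank K W < n := hn ▸ Submodule.finrank_lt htop
  have hQ : finrank K (V ⧸ W) < n := by
    rw [← hn, ← W.finrank_quotient_add_finrank]
    exact Nat.lt_add_of_pos_right (Submodule.one_le_finrank_iff.2 hbot)
  exact .of_restrict_of_mapQ x' y' (ih _ hW hrkW rfl) (ih _ hQ hrkQ rfl)

end Field

end Module.End

/-- If the commutator of two endomorphisms `x, y` of a finite-dimensional complex vector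
space has rank at most one, then `Tr(a ∘ (x∘y − y∘x)) = 0` for every element `a` of the
unital subalgebra of `End(V)` generated by `x` and `y` (i.e. every noncommutative
polynomial in `x` and `y`). -/
theorem trace_poly_mul_commutator_eq_zero
    (V : Type*) [AddCommGroup V] [Module ℂ V] [FiniteDimensional ℂ V]
    (x y : Module.End ℂ V)
    (hrk : Module.finrank ℂ (LinearMap.range (x * y - y * x)) ≤ 1) :
    ∀ a ∈ Algebra.adjoin ℂ {x, y},
      LinearMap.trace ℂ V (a * (x * y - y * x)) = 0 :=
  Module.End.isTraceOrthogonalCommutator_of_finrank_range_le_one hrk
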